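/- arXiv:1612.09034 — 7 statements merged into one kernel-verified Lean document; each statement's English description precedes it below -/
import Mathlib

section
/- Fix centers x_A, x_B in ℝ^n and squared radii r_A² > 0, r_B² > 0, and fix ε ∈ (0,1). Suppose ‖x_A − x_B‖² ≥ r_B². Then there exists a point c ∈ ℝ^n such that for every δ > 0 one has B(x_A, r_A² − ε·r_B² − δ) ∩ B(x_B, (1−ε)·r_B² − δ) ⊆ B(c, (1−√ε)·r_A² − δ). -/
/-!
Take `c = (1 - t) • x_A + t • x_B` with `t = √ε`. The squared distance to a convex combination of
two points is the same combination of the squared distances, minus `t (1 - t) ‖x_A - x_B‖²`.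
Bounding the last term by `t (1 - t) r_B²`, the three `r_B²` contributions cancel exactly because
`t² = ε`, leaving `(1 - t) r_A² - δ`.
-/

/-- The ball `B(c, r²) = {y : ‖y − c‖² ≤ r²}` (empty when `r² < 0`). -/
def B {n : ℕ} (c : EuclideanSpace ℝ (Fin n)) (r2 : ℝ) : Set (EuclideanSpace ℝ (Fin n)) :=
  {y | ‖y - c‖ ^ 2 ≤ r2}

section

variable {E : Type*} [NormedAddCommGroup E] [InnerProductSpace ℝ E]

theorem norm_sub_convex_combination_sq (y a b : E) (t : ℝ) :
    ‖y - ((1 - t) • a + t • b)‖ ^ 2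
      = (1 - t) * ‖y - a‖ ^ 2 + t * ‖y - b‖ ^ 2 - t * (1 - t) * ‖a - b‖ ^ 2 := by
  have hy : y - ((1 - t) • a + t • b) = (1 - t) • (y - a) + t • (y - b) := by module
  have hab : a - b = (y - b) - (y - a) := by abel
  rw [hy, hab, ← real_inner_self_eq_norm_sq, ← real_inner_self_eq_norm_sq,
    ← real_inner_self_eq_norm_sq, ← real_inner_self_eq_norm_sq]
  simp only [inner_add_add_self, inner_sub_sub_self, real_inner_smul_left, real_inner_smul_right,
    real_inner_comm (y - a) (y - b)]
  ring

theorem norm_sub_convex_combination_sq_le {y a b : E} {t R S D : ℝ} (ht₀ : 0 ≤ t) (ht₁ : t ≤ 1)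
    (hya : ‖y - a‖ ^ 2 ≤ R) (hyb : ‖y - b‖ ^ 2 ≤ S) (hab : D ≤ ‖a - b‖ ^ 2) :
    ‖y - ((1 - t) • a + t • b)‖ ^ 2 ≤ (1 - t) * R + t * S - t * (1 - t) * D := by
  rw [norm_sub_convex_combination_sq]
  have h1t : 0 ≤ 1 - t := sub_nonneg.mpr ht₁
  gcongr

end

theorem stmt_0_general (n : ℕ) (xA xB : EuclideanSpace ℝ (Fin n)) (rA2 rB2 ε : ℝ)
    (hε : ε ∈ Set.Ioo (0 : ℝ) 1)
    (hdist : ‖xA - xB‖ ^ 2 ≥ rB2) :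
    ∃ c : EuclideanSpace ℝ (Fin n), ∀ δ : ℝ, 0 < δ →
      B xA (rA2 - ε * rB2 - δ) ∩ B xB ((1 - ε) * rB2 - δ)
        ⊆ B c ((1 - Real.sqrt ε) * rA2 - δ) := by
  obtain ⟨hε₀, hε₁⟩ := hε
  have hsq : Real.sqrt ε ^ 2 = ε := Real.sq_sqrt hε₀.le
  have hle : Real.sqrt ε ≤ 1 := Real.sqrt_le_one.mpr hε₁.le
  refine ⟨(1 - Real.sqrt ε) • xA + Real.sqrt ε • xB, fun δ _ y ⟨hyA, hyB⟩ => ?_⟩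
  calc ‖y - ((1 - Real.sqrt ε) • xA + Real.sqrt ε • xB)‖ ^ 2
      ≤ (1 - Real.sqrt ε) * (rA2 - ε * rB2 - δ) + Real.sqrt ε * ((1 - ε) * rB2 - δ)
          - Real.sqrt ε * (1 - Real.sqrt ε) * rB2 :=
        norm_sub_convex_combination_sq_le (Real.sqrt_nonneg ε) hle hyA hyB hdist
    _ = (1 - Real.sqrt ε) * rA2 - δ := by linear_combination rB2 * hsq

/-- minimum enclosing ball lemma. -/
theorem stmt_0 (n : ℕ) (xA xB : EuclideanSpace ℝ (Fin n)) (rA2 rB2 ε : ℝ)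
    (hrA : 0 < rA2) (hrB : 0 < rB2) (hε : ε ∈ Set.Ioo (0 : ℝ) 1)
    (hdist : ‖xA - xB‖ ^ 2 ≥ rB2) :
    ∃ c : EuclideanSpace ℝ (Fin n), ∀ δ : ℝ, 0 < δ →
      B xA (rA2 - ε * rB2 - δ) ∩ B xB ((1 - ε) * rB2 - δ)
        ⊆ B c ((1 - Real.sqrt ε) * rA2 - δ) :=
  stmt_0_general n xA xB rA2 rB2 ε hε hdist
end

section
/- For every x, y ∈ ℝ^n and every step size t ∈ (0, 1/β], one has F(y) ≥ F(x⁺) + ⟨G_t(x), y − x⟩ + (t/2)·‖G_t(x)‖² + (α/2)·‖y − x‖². -/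
/-!
Write `x⁺ = x - t • G`. Strong convexity bounds `f y` from below by the tangent model at `x`
plus `α/2 ‖y - x‖²`; the descent lemma bounds `f x⁺` from above by the tangent model plus
`β/2 ‖t G‖² ≤ t/2 ‖G‖²`; and optimality of the proximal step makes `G - ∇f x` a subgradient
of `h` at `x⁺`. Adding the three inequalities, the `∇f x` terms cancel.
-/

open scoped RealInnerProductSpace NNReal
open Set Filter Topology

section
variable {E : Type*} [NormedAddCommGroup E] [InnerProductSpace ℝ E]

lemma IsMinOn.inner_sub_le_sub_of_prox {φ : E → ℝ} (hφ : ConvexOn ℝ univ φ) {v p : E}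
    (hp : IsMinOn (fun z => φ z + ‖z - v‖ ^ 2 / 2) univ p) (y : E) :
    ⟪v - p, y - p⟫ ≤ φ y - φ p := by
  set c := φ y - φ p - ⟪v - p, y - p⟫
  -- compare `p` with the points `p + s • (y - p)`, then let `s → 0⁺`
  have hsmall {s : ℝ} (hs : s ∈ Ioc (0 : ℝ) 1) : 0 ≤ c + s * (‖y - p‖ ^ 2 / 2) := by
    have hmin : φ p + ‖p - v‖ ^ 2 / 2
        ≤ φ (p + s • (y - p)) + ‖p + s • (y - p) - v‖ ^ 2 / 2 := hp (mem_univ _)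
    have hcvx : φ (p + s • (y - p)) ≤ (1 - s) * φ p + s * φ y := by
      have := hφ.2 (mem_univ p) (mem_univ y) (sub_nonneg.2 hs.2) hs.1.le (sub_add_cancel 1 s)
      rwa [show (1 - s) • p + s • y = p + s • (y - p) by module, smul_eq_mul, smul_eq_mul] at this
    have hsq : ‖p + s • (y - p) - v‖ ^ 2
        = ‖p - v‖ ^ 2 - 2 * s * ⟪v - p, y - p⟫ + s ^ 2 * ‖y - p‖ ^ 2 := by
      rw [show p + s • (y - p) - v = (p - v) + s • (y - p) by module, norm_add_sq_real,
        real_inner_smul_right, norm_smul, mul_pow, Real.norm_eq_abs, sq_abs,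
        ← neg_sub v p, inner_neg_left]
      ring
    rw [hsq] at hmin
    have : 0 ≤ s * (c + s * (‖y - p‖ ^ 2 / 2)) := by nlinarith
    exact nonneg_of_mul_nonneg_right this hs.1
  have hlim : Tendsto (fun s : ℝ => c + s * (‖y - p‖ ^ 2 / 2)) (𝓝[>] 0) (𝓝 c) := by
    refine ((continuous_const.add (continuous_id.mul continuous_const)).tendsto' 0 c ?_).mono_left
      nhdsWithin_le_nhds
    simp [c]
  have := ge_of_tendsto hlim (eventually_of_mem (Ioc_mem_nhdsGT zero_lt_one) @hsmall)
  linarith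

variable [CompleteSpace E]

lemma HasGradientAt.hasDerivAt_comp_add_smul {f : E → ℝ} {g x d : E} {s : ℝ}
    (hf : HasGradientAt f g (x + s • d)) :
    HasDerivAt (fun s : ℝ => f (x + s • d)) ⟪g, d⟫ s := by
  have hline : HasDerivAt (fun s : ℝ => x + s • d) d s := by
    simpa using ((hasDerivAt_id s).smul_const d).const_add x
  exact (hf.hasFDerivAt.comp_hasDerivAt s hline :)

lemma ConvexOn.inner_le_sub_of_hasGradientAt {g : E → ℝ} (hg : ConvexOn ℝ univ g) {g' x : E}
    (hx : HasGradientAt g g' x) (y : E) : ⟪g', y - x⟫ ≤ g y - g x := by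
  have hline : (fun s : ℝ => g (x + s • (y - x))) = g ∘ AffineMap.lineMap x y := by
    funext s
    simp [AffineMap.lineMap_apply_module', add_comm]
  have hconv : ConvexOn ℝ univ (fun s : ℝ => g (x + s • (y - x))) := by
    rw [hline]
    simpa using hg.comp_affineMap (AffineMap.lineMap x y)
  have hderiv := HasGradientAt.hasDerivAt_comp_add_smul (d := y - x) (s := 0) (by simpa using hx)
  simpa [slope_def_field] using hconv.le_slope_of_hasDerivAt (mem_univ 0) (mem_univ 1) one_pos hderiv

lemma add_inner_gradient_add_sq_le_of_convexOn_sub {f : E → ℝ} {α : ℝ}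
    (hsc : ConvexOn ℝ univ (fun z => f z - α / 2 * ‖z‖ ^ 2)) {x : E}
    (hf : DifferentiableAt ℝ f x) (y : E) :
    f x + ⟪gradient f x, y - x⟫ + α / 2 * ‖y - x‖ ^ 2 ≤ f y := by
  have hgrad : HasGradientAt (fun z => f z - α / 2 * ‖z‖ ^ 2) (gradient f x - α • x) x := by
    rw [hasGradientAt_iff_hasFDerivAt]
    refine (hf.hasFDerivAt.sub ((hasStrictFDerivAt_norm_sq x).hasFDerivAt.const_mul (α / 2))
      ).congr_fderiv ?_
    ext w
    simp [-inner_gradient_left]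
    ring
  have := hsc.inner_le_sub_of_hasGradientAt hgrad y
  rw [norm_sub_sq_real, real_inner_comm x y]
  simp only [inner_sub_left, inner_sub_right, real_inner_smul_left,
    real_inner_self_eq_norm_sq] at this ⊢
  linarith

lemma le_add_inner_gradient_add_sq_of_lipschitzWith {f : E → ℝ} {K : ℝ≥0}
    (hf : Differentiable ℝ f) (hlip : LipschitzWith K (gradient f)) (x y : E) :
    f y ≤ f x + ⟪gradient f x, y - x⟫ + K / 2 * ‖y - x‖ ^ 2 := by
  set d := y - x
  -- the gap between `f` and the quadratic model along the segment is antitone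
  set ψ : ℝ → ℝ := fun s => f (x + s • d) - s * ⟪gradient f x, d⟫ - s ^ 2 * (K / 2 * ‖d‖ ^ 2)
  have hψ (s : ℝ) : HasDerivAt ψ
      (⟪gradient f (x + s • d) - gradient f x, d⟫ - s * (K * ‖d‖ ^ 2)) s := by
    have := ((HasGradientAt.hasDerivAt_comp_add_smul (x := x) (d := d) (hf _).hasGradientAt).sub
      ((hasDerivAt_id s).mul_const ⟪gradient f x, d⟫)).sub
      ((hasDerivAt_pow 2 s).mul_const (K / 2 * ‖d‖ ^ 2))
    refine (this.congr_deriv ?_ :)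
    rw [inner_sub_left]
    push_cast
    ring
  have hderiv_le {s : ℝ} (hs : 0 ≤ s) :
      ⟪gradient f (x + s • d) - gradient f x, d⟫ ≤ s * (K * ‖d‖ ^ 2) :=
    calc ⟪gradient f (x + s • d) - gradient f x, d⟫
        ≤ ‖gradient f (x + s • d) - gradient f x‖ * ‖d‖ := real_inner_le_norm _ _
      _ ≤ K * ‖x + s • d - x‖ * ‖d‖ := by gcongr; exact hlip.norm_sub_le _ _
      _ = s * (K * ‖d‖ ^ 2) := by
        rw [add_sub_cancel_left, norm_smul, Real.norm_of_nonneg hs]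
        ring
  have hanti : AntitoneOn ψ (Icc 0 1) :=
    antitoneOn_of_deriv_nonpos (convex_Icc 0 1) (fun s _ => (hψ s).continuousAt.continuousWithinAt)
      (fun s _ => (hψ s).differentiableAt.differentiableWithinAt)
      (fun s hs => by
        rw [(hψ s).deriv, sub_nonpos]
        exact hderiv_le (interior_subset hs).1)
  have := hanti (left_mem_Icc.2 zero_le_one) (right_mem_Icc.2 zero_le_one) zero_le_one
  simp only [ψ, zero_smul, one_smul, add_zero, add_sub_cancel, d] at this
  linarith

end

theorem stmt_2_general (n : ℕ) (α β t : ℝ)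
    (f h : EuclideanSpace ℝ (Fin n) → ℝ)
    (hsc : ConvexOn ℝ Set.univ (fun z => f z - α / 2 * ‖z‖ ^ 2))
    (hf : Differentiable ℝ f)
    (hlip : LipschitzWith β.toNNReal (fun z => gradient f z))
    (hconv : ConvexOn ℝ Set.univ h)
    (ht : t ∈ Set.Ioc (0 : ℝ) (1 / β))
    (x xplus : EuclideanSpace ℝ (Fin n))
    (hprox : IsMinOn (fun z => t * h z + ‖z - (x - t • gradient f x)‖ ^ 2 / 2)
      Set.univ xplus) :
    ∀ y : EuclideanSpace ℝ (Fin n),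
      f y + h y ≥ (f xplus + h xplus) + ⟪t⁻¹ • (x - xplus), y - x⟫
        + t / 2 * ‖t⁻¹ • (x - xplus)‖ ^ 2 + α / 2 * ‖y - x‖ ^ 2 := by
  intro y
  obtain ⟨htpos, htβ⟩ := ht
  have hβpos : 0 < β := one_div_pos.1 (htpos.trans_le htβ)
  have hβt : β * t ≤ 1 := by rwa [le_div_iff₀ hβpos, mul_comm] at htβ
  obtain ⟨G, rfl⟩ : ∃ G, xplus = x - t • G :=
    ⟨t⁻¹ • (x - xplus), by simp [smul_smul, htpos.ne']⟩
  rw [show t⁻¹ • (x - (x - t • G)) = G by simp [smul_smul, htpos.ne']]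
  have hstrong := add_inner_gradient_add_sq_le_of_convexOn_sub hsc (hf x) y
  have hdescent := le_add_inner_gradient_add_sq_of_lipschitzWith hf hlip x (x - t • G)
  have hsubgrad := IsMinOn.inner_sub_le_sub_of_prox (φ := fun z => t * h z)
    (hconv.smul htpos.le) hprox y
  rw [Real.coe_toNNReal β hβpos.le, show x - t • G - x = -(t • G) by abel, norm_neg, norm_smul,
    inner_neg_right, real_inner_smul_right, Real.norm_of_nonneg htpos.le] at hdescent
  rw [show x - t • gradient f x - (x - t • G) = t • (G - gradient f x) by module,
    show y - (x - t • G) = (y - x) + t • G by abel, real_inner_smul_left, ← mul_sub] at hsubgrad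
  have hsubgrad' := le_of_mul_le_mul_left hsubgrad htpos
  simp only [inner_add_right, real_inner_smul_right, inner_sub_left, real_inner_self_eq_norm_sq]
    at hsubgrad'
  have hquad : β * t ^ 2 * ‖G‖ ^ 2 ≤ t * ‖G‖ ^ 2 := by
    have := mul_le_mul_of_nonneg_right hβt (by positivity : 0 ≤ t * ‖G‖ ^ 2)
    linarith
  rw [mul_pow] at hdescent
  linarith

/-- the key lemma (Lemma 3.1). `f` is `α`-strongly convex and `β`-smooth,
`h` is closed convex, `F = f + h`, `xplus = Prox_{th}(x − t∇f(x))` and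
`G_t(x) = t⁻¹ • (x - xplus)`. For every `y` and `t ∈ (0, 1/β]`,
`F(y) ≥ F(x⁺) + ⟨G_t(x), y − x⟩ + (t/2)‖G_t(x)‖² + (α/2)‖y − x‖²`. -/
theorem stmt_2 (n : ℕ) (α β t : ℝ) (hα : 0 < α) (hαβ : α ≤ β)
    (f h : EuclideanSpace ℝ (Fin n) → ℝ)
    (hsc : ConvexOn ℝ Set.univ (fun z => f z - α / 2 * ‖z‖ ^ 2))
    (hf : Differentiable ℝ f)
    (hlip : LipschitzWith β.toNNReal (fun z => gradient f z))
    (hconv : ConvexOn ℝ Set.univ h) (hlsc : LowerSemicontinuous h)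
    (ht : t ∈ Set.Ioc (0 : ℝ) (1 / β))
    (x xplus : EuclideanSpace ℝ (Fin n))
    (hprox : IsMinOn (fun z => t * h z + ‖z - (x - t • gradient f x)‖ ^ 2 / 2)
      Set.univ xplus) :
    ∀ y : EuclideanSpace ℝ (Fin n),
      f y + h y ≥ (f xplus + h xplus) + ⟪t⁻¹ • (x - xplus), y - x⟫
        + t / 2 * ‖t⁻¹ • (x - xplus)‖ ^ 2 + α / 2 * ‖y - x‖ ^ 2 :=
  stmt_2_general n α β t f h hsc hf hlip hconv ht x xplus hprox
end

section
/- Let t > 0 and let x ∈ ℝ^n satisfy the line-search condition f(x⁺) ≤ f(x) − t·⟨∇f(x), G_t(x)⟩ + (t/2)·‖G_t(x)‖². Then for every y ∈ ℝ^n, F(y) ≥ F(x⁺) + ⟨G_t(x), y − x⟩ + (t/2)·‖G_t(x)‖² + (α/2)·‖y − x‖². -/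
open scoped RealInnerProductSpace
open Set

/-!
Add three inequalities: strong convexity of `f` at `x`, evaluated at `y`; the optimality condition
of the prox step, which says that `G_t(x) - ∇f(x)` is a subgradient of `h` at `x⁺`; and the
line-search condition, which bounds `f x⁺` from above. Writing `y - x⁺ = (y - x) + t G_t(x)`, the
cross terms in `∇f(x)` cancel. Both first-order conditions come from the one-sided derivative along
the segment `[x, y]`, whose difference quotients convexity bounds by the increment over the segment.
-/

section Normed

variable {E : Type*} [NormedAddCommGroup E] [NormedSpace ℝ E] {s : Set E} {g q : E → ℝ}
  {x y : E}

theorem ConvexOn.apply_add_smul_sub_le (hg : ConvexOn ℝ s g) (hx : x ∈ s) (hy : y ∈ s) {r : ℝ}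
    (hr : r ∈ Icc 0 1) : g (x + r • (y - x)) ≤ g x + r * (g y - g x) := by
  have := hg.2 hx hy (sub_nonneg.2 hr.2) hr.1 (sub_add_cancel 1 r)
  rw [show (1 - r) • x + r • y = x + r • (y - x) by module, smul_eq_mul, smul_eq_mul] at this
  linarith

theorem ConvexOn.sub_le_of_isMinOn_add {q' : E →L[ℝ] ℝ} (hg : ConvexOn ℝ s g)
    (hq : HasFDerivAt q q' x) (hmin : IsMinOn (fun z => g z + q z) s x) (hx : x ∈ s)
    (hy : y ∈ s) : g x - q' (y - x) ≤ g y := by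
  have hslope_ge : ∀ r ∈ Ioc (0 : ℝ) 1, g x - g y ≤ r⁻¹ • (q (x + r • (y - x)) - q x) := by
    intro r hr
    have hconv := hg.apply_add_smul_sub_le hx hy (Ioc_subset_Icc_self hr)
    have hmin_r := hmin (hg.1.add_smul_sub_mem hx hy (Ioc_subset_Icc_self hr))
    rw [smul_eq_mul, le_inv_mul_iff₀ hr.1]
    linarith [show g x + q x ≤ _ from hmin_r]
  suffices g x - g y ≤ q' (y - x) by linarith
  refine ge_of_tendsto (hq.hasLineDerivAt (y - x)).tendsto_slope_zero_right ?_
  filter_upwards [Ioc_mem_nhdsGT (zero_lt_one' ℝ)] using hslope_ge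

theorem ConvexOn.apply_add_fderiv_le {g' : E →L[ℝ] ℝ} (hg : ConvexOn ℝ s g)
    (hd : HasFDerivAt g g' x) (hx : x ∈ s) (hy : y ∈ s) : g x + g' (y - x) ≤ g y := by
  -- `x` minimizes `g + (-g) = 0`.
  simpa [sub_eq_add_neg] using hg.sub_le_of_isMinOn_add hd.neg (fun z _ => by simp) hx hy

end Normed

section InnerProduct

variable {E : Type*} [NormedAddCommGroup E] [InnerProductSpace ℝ E] {s : Set E} {x y : E}

theorem StrongConvexOn.add_inner_add_le_of_hasGradientAt [CompleteSpace E] {m : ℝ} {f : E → ℝ}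
    {f' : E} (hf : StrongConvexOn s m f) (hd : HasGradientAt f f' x) (hx : x ∈ s) (hy : y ∈ s) :
    f x + ⟪f', y - x⟫ + m / 2 * ‖y - x‖ ^ 2 ≤ f y := by
  have hd' := hd.hasFDerivAt.sub ((hasStrictFDerivAt_norm_sq x).hasFDerivAt.const_mul (m / 2))
  have := (strongConvexOn_iff_convex.1 hf).apply_add_fderiv_le hd' hx hy
  simp only [sub_apply, smul_apply, InnerProductSpace.toDual_apply_apply, innerSL_apply_apply,
    nsmul_eq_mul, Nat.cast_ofNat, smul_eq_mul, inner_sub_right, real_inner_self_eq_norm_sq] at this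
  rw [norm_sub_sq_real, inner_sub_right, real_inner_comm x y]
  linear_combination this

theorem ConvexOn.add_inner_le_of_isMinOn_prox {g : E → ℝ} {u p : E} (hg : ConvexOn ℝ s g)
    (hmin : IsMinOn (fun z => g z + ‖z - u‖ ^ 2 / 2) s p) (hp : p ∈ s) (hy : y ∈ s) :
    g p + ⟪u - p, y - p⟫ ≤ g y := by
  have hd : HasFDerivAt (fun z => ‖z - u‖ ^ 2 / 2) (innerSL ℝ (p - u)) p := by
    have := ((hasFDerivAt_id p).sub_const u).norm_sq.mul_const (1 / 2 : ℝ)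
    simp only [id, ← div_eq_mul_one_div] at this
    exact this.congr_fderiv (by ext v; simp)
  have := hg.sub_le_of_isMinOn_add hd hmin hp hy
  rw [innerSL_apply_apply, ← neg_sub u p, inner_neg_left] at this
  linarith

end InnerProduct

theorem stmt_3_general (n : ℕ) (α t : ℝ) (ht : 0 < t)
    (f h : EuclideanSpace ℝ (Fin n) → ℝ)
    (hsc : ConvexOn ℝ Set.univ (fun z => f z - α / 2 * ‖z‖ ^ 2))
    (hf : Differentiable ℝ f)
    (hconv : ConvexOn ℝ Set.univ h)
    (x xplus : EuclideanSpace ℝ (Fin n))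
    (hprox : IsMinOn (fun z => t * h z + ‖z - (x - t • gradient f x)‖ ^ 2 / 2)
      Set.univ xplus)
    (hline : f xplus ≤ f x - t * ⟪gradient f x, t⁻¹ • (x - xplus)⟫
      + t / 2 * ‖t⁻¹ • (x - xplus)‖ ^ 2) :
    ∀ y : EuclideanSpace ℝ (Fin n),
      f y + h y ≥ (f xplus + h xplus) + ⟪t⁻¹ • (x - xplus), y - x⟫
        + t / 2 * ‖t⁻¹ • (x - xplus)‖ ^ 2 + α / 2 * ‖y - x‖ ^ 2 := by
  intro y
  set g := gradient f x
  set G := t⁻¹ • (x - xplus)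
  have hxG : x - xplus = t • G := (smul_inv_smul₀ ht.ne' _).symm
  clear_value G
  have hf_lower := (strongConvexOn_iff_convex.2 hsc).add_inner_add_le_of_hasGradientAt
    (hf x).hasGradientAt (mem_univ x) (mem_univ y)
  have hh_lower : h xplus + ⟪G - g, y - xplus⟫ ≤ h y := by
    have := (hconv.smul ht.le).add_inner_le_of_isMinOn_prox hprox (mem_univ _) (mem_univ y)
    rw [show x - t • g - xplus = t • (G - g) by rw [smul_sub, ← hxG]; abel, real_inner_smul_left,
      smul_eq_mul, smul_eq_mul, ← mul_add] at this
    exact le_of_mul_le_mul_left this ht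
  rw [show y - xplus = (y - x) + t • G by rw [← hxG]; abel, inner_sub_left, inner_add_right,
    inner_add_right, real_inner_smul_right, real_inner_smul_right, real_inner_self_eq_norm_sq]
    at hh_lower
  linarith

/-- the key lemma under a line-search condition instead of `t ≤ 1/β`.
`f` is `α`-strongly convex and differentiable, `h` is closed convex, `F = f + h`,
`xplus = Prox_{th}(x − t∇f(x))` and `G_t(x) = t⁻¹ • (x - xplus)`. -/
theorem stmt_3 (n : ℕ) (α t : ℝ) (hα : 0 < α) (ht : 0 < t)
    (f h : EuclideanSpace ℝ (Fin n) → ℝ)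
    (hsc : ConvexOn ℝ Set.univ (fun z => f z - α / 2 * ‖z‖ ^ 2))
    (hf : Differentiable ℝ f)
    (hconv : ConvexOn ℝ Set.univ h) (hlsc : LowerSemicontinuous h)
    (x xplus : EuclideanSpace ℝ (Fin n))
    (hprox : IsMinOn (fun z => t * h z + ‖z - (x - t • gradient f x)‖ ^ 2 / 2)
      Set.univ xplus)
    (hline : f xplus ≤ f x - t * ⟪gradient f x, t⁻¹ • (x - xplus)⟫
      + t / 2 * ‖t⁻¹ • (x - xplus)‖ ^ 2) :
    ∀ y : EuclideanSpace ℝ (Fin n),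
      f y + h y ≥ (f xplus + h xplus) + ⟪t⁻¹ • (x - xplus), y - x⟫
        + t / 2 * ‖t⁻¹ • (x - xplus)‖ ^ 2 + α / 2 * ‖y - x‖ ^ 2 :=
  stmt_3_general n α t ht f h hsc hf hconv x xplus hprox hline
end

section
/- Fix t > 0 and x, c ∈ ℝ^n. The function φ_{t,x,c} is Lipschitz continuous: for all z₁, z₂ ∈ ℝ^n, |φ_{t,x,c}(z₁) − φ_{t,x,c}(z₂)| ≤ (2 + tβ)·‖x − c‖·‖z₁ − z₂‖. -/
/-!
The map `z ↦ z⁺ - z` is `(2 + tβ)`-Lipschitz, since the gradient step `z ↦ z - t∇f(z)` is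
`(1 + tβ)`-Lipschitz and the proximal map is nonexpansive; Cauchy–Schwarz then transfers the
Lipschitz bound to `φ`. Nonexpansiveness of the proximal map comes from the `1`-strong convexity
of `u ↦ t h(u) + ‖u - v‖² / 2`: adding the quadratic growth inequalities at the two minimizers
shows that the proximal map is firmly nonexpansive.
-/

open Set Filter Topology
open scoped RealInnerProductSpace NNReal

theorem StrongConvexOn.add_sq_norm_sub_le_of_isMinOn {E : Type*} [NormedAddCommGroup E]
    [NormedSpace ℝ E] {s : Set E} {m : ℝ} {f : E → ℝ} {p u : E} (hf : StrongConvexOn s m f)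
    (hmin : IsMinOn f s p) (hp : p ∈ s) (hu : u ∈ s) :
    f p + m / 2 * ‖u - p‖ ^ 2 ≤ f u := by
  have hsegment : ∀ l ∈ Ioo (0 : ℝ) 1, (1 - l) * (m / 2 * ‖u - p‖ ^ 2) ≤ f u - f p := by
    rintro l ⟨hl₀, hl₁⟩
    have hconv := hf.2 hp hu (sub_nonneg.2 hl₁.le) hl₀.le (sub_add_cancel 1 l)
    have hle : f p ≤ f ((1 - l) • p + l • u) :=
      hmin (hf.1 hp hu (sub_nonneg.2 hl₁.le) hl₀.le (sub_add_cancel 1 l))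
    rw [smul_eq_mul, smul_eq_mul, norm_sub_rev] at hconv
    dsimp only at hconv
    refine le_of_mul_le_mul_left ?_ hl₀
    linarith
  have hlim : Tendsto (fun l : ℝ => (1 - l) * (m / 2 * ‖u - p‖ ^ 2)) (𝓝[>] 0)
      (𝓝 (m / 2 * ‖u - p‖ ^ 2)) := by
    refine tendsto_nhdsWithin_of_tendsto_nhds ?_
    have := ((continuous_const.sub continuous_id).mul continuous_const).tendsto
      (f := fun l : ℝ => (1 - l) * (m / 2 * ‖u - p‖ ^ 2)) 0
    rwa [sub_zero, one_mul] at this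
  linarith [le_of_tendsto hlim (eventually_of_mem (Ioo_mem_nhdsGT one_pos) hsegment)]

section Prox

variable {E : Type*} [NormedAddCommGroup E] [InnerProductSpace ℝ E]

theorem ConvexOn.strongConvexOn_smul_add_half_sq_norm_sub {s : Set E} {h : E → ℝ} {t : ℝ}
    (hh : ConvexOn ℝ s h) (ht : 0 ≤ t) (v : E) :
    StrongConvexOn s 1 fun u => t * h u + ‖u - v‖ ^ 2 / 2 := by
  rw [strongConvexOn_iff_convex]
  have hlin : ConvexOn ℝ s fun u => -⟪v, u⟫ + ‖v‖ ^ 2 / 2 :=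
    (-innerₛₗ ℝ v).convexOn hh.1 |>.add_const _
  have hrewrite : (fun u => t * h u + ‖u - v‖ ^ 2 / 2 - 1 / 2 * ‖u‖ ^ 2)
      = fun u => t • h u + (-⟪v, u⟫ + ‖v‖ ^ 2 / 2) := by
    funext u
    rw [smul_eq_mul, norm_sub_sq_real, real_inner_comm v u]
    ring
  rw [hrewrite]
  exact (hh.smul ht).add hlin

theorem prox_norm_sub_sq_le_inner {t : ℝ} {h : E → ℝ} {P : E → E}
    (hh : ConvexOn ℝ univ h) (ht : 0 ≤ t)
    (hP : ∀ v, IsMinOn (fun u => t * h u + ‖u - v‖ ^ 2 / 2) univ (P v)) (v₁ v₂ : E) :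
    ‖P v₁ - P v₂‖ ^ 2 ≤ ⟪P v₁ - P v₂, v₁ - v₂⟫ := by
  have h₁ := (hh.strongConvexOn_smul_add_half_sq_norm_sub ht v₁).add_sq_norm_sub_le_of_isMinOn
    (hP v₁) (mem_univ _) (mem_univ (P v₂))
  have h₂ := (hh.strongConvexOn_smul_add_half_sq_norm_sub ht v₂).add_sq_norm_sub_le_of_isMinOn
    (hP v₂) (mem_univ _) (mem_univ (P v₁))
  rw [norm_sub_rev] at h₁
  simp only [norm_sub_sq_real, inner_sub_left, inner_sub_right, real_inner_comm] at h₁ h₂ ⊢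
  linarith

theorem prox_lipschitzWith_one {t : ℝ} {h : E → ℝ} {P : E → E}
    (hh : ConvexOn ℝ univ h) (ht : 0 ≤ t)
    (hP : ∀ v, IsMinOn (fun u => t * h u + ‖u - v‖ ^ 2 / 2) univ (P v)) :
    LipschitzWith 1 P := by
  refine LipschitzWith.of_dist_le_mul fun v₁ v₂ => ?_
  rw [NNReal.coe_one, one_mul, dist_eq_norm, dist_eq_norm]
  have hfirm := (prox_norm_sub_sq_le_inner hh ht hP v₁ v₂).trans (real_inner_le_norm _ _)
  nlinarith [norm_nonneg (P v₁ - P v₂), norm_nonneg (v₁ - v₂)]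

theorem LipschitzWith.abs_inner_sub_le {α : Type*} [PseudoMetricSpace α] {K : ℝ≥0} {F : α → E}
    (hF : LipschitzWith K F) (w : E) (z₁ z₂ : α) :
    |⟪F z₁, w⟫ - ⟪F z₂, w⟫| ≤ K * ‖w‖ * dist z₁ z₂ := by
  rw [← inner_sub_left]
  calc |⟪F z₁ - F z₂, w⟫| ≤ ‖F z₁ - F z₂‖ * ‖w‖ := abs_real_inner_le_norm _ _
    _ ≤ K * dist z₁ z₂ * ‖w‖ := by
      rw [← dist_eq_norm]
      gcongr
      exact hF.dist_le_mul z₁ z₂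
    _ = K * ‖w‖ * dist z₁ z₂ := by ring

end Prox

theorem stmt_6_general (n : ℕ) (β t : ℝ) (hβ : 0 < β) (ht : 0 < t)
    (f h : EuclideanSpace ℝ (Fin n) → ℝ)
    (hlip : LipschitzWith β.toNNReal (fun z => gradient f z))
    (hconv : ConvexOn ℝ Set.univ h)
    (P : EuclideanSpace ℝ (Fin n) → EuclideanSpace ℝ (Fin n))
    (hP : ∀ v, IsMinOn (fun u => t * h u + ‖u - v‖ ^ 2 / 2) Set.univ (P v))
    (x c : EuclideanSpace ℝ (Fin n)) :
    ∀ z₁ z₂ : EuclideanSpace ℝ (Fin n),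
      |⟪P (z₁ - t • gradient f z₁) - z₁, x - c⟫ - ⟪P (z₂ - t • gradient f z₂) - z₂, x - c⟫|
        ≤ (2 + t * β) * ‖x - c‖ * ‖z₁ - z₂‖ := by
  intro z₁ z₂
  have hstep : LipschitzWith (1 + ‖t‖₊ * β.toNNReal) fun z => z - t • gradient f z :=
    LipschitzWith.id.sub ((lipschitzWith_smul t).comp hlip)
  have hφ : LipschitzWith (1 * (1 + ‖t‖₊ * β.toNNReal) + 1)
      fun z => P (z - t • gradient f z) - z :=
    ((prox_lipschitzWith_one hconv ht.le hP).comp hstep).sub LipschitzWith.id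
  convert hφ.abs_inner_sub_le (x - c) z₁ z₂ using 2
  · push_cast [Real.coe_toNNReal _ hβ.le, coe_nnnorm, Real.norm_of_nonneg ht.le]
    ring
  · exact (dist_eq_norm _ _).symm

/-- Lemma 3.3(i): Lipschitz continuity of
`φ_{t,x,c}(z) = ⟨z⁺ − z, x − c⟩`, where `z⁺ = P (z − t∇f(z))` and `P v = Prox_{th}(v)`
is the minimizer of `u ↦ t·h(u) + ½‖u − v‖²`. -/
theorem stmt_6 (n : ℕ) (β t : ℝ) (hβ : 0 < β) (ht : 0 < t)
    (f h : EuclideanSpace ℝ (Fin n) → ℝ)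
    (hf : Differentiable ℝ f)
    (hlip : LipschitzWith β.toNNReal (fun z => gradient f z))
    (hconv : ConvexOn ℝ Set.univ h) (hlsc : LowerSemicontinuous h)
    (P : EuclideanSpace ℝ (Fin n) → EuclideanSpace ℝ (Fin n))
    (hP : ∀ v, IsMinOn (fun u => t * h u + ‖u - v‖ ^ 2 / 2) Set.univ (P v))
    (x c : EuclideanSpace ℝ (Fin n)) :
    ∀ z₁ z₂ : EuclideanSpace ℝ (Fin n),
      |⟪P (z₁ - t • gradient f z₁) - z₁, x - c⟫ - ⟪P (z₂ - t • gradient f z₂) - z₂, x - c⟫|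
        ≤ (2 + t * β) * ‖x - c‖ * ‖z₁ - z₂‖ :=
  stmt_6_general n β t hβ ht f h hlip hconv P hP x c
end

section
/- Fix t ∈ (0, 1/β] and x, c ∈ ℝ^n with x ≠ c. Then φ̄_{t,x,c} is strictly monotonically increasing; quantitatively, for all s₁ < s₂ one has φ̄_{t,x,c}(s₂) − φ̄_{t,x,c}(s₁) ≥ (αt/2)·(s₂ − s₁)·‖x − c‖² > 0. -/
open Set Filter Topology
open scoped RealInnerProductSpace NNReal

/-! The forward–backward map `z ↦ Prox_{th}(z - t∇f(z))` is a `(1 - αt/2)`-contraction for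
`0 < t ≤ 1/β`: the gradient step contracts squared distances by the factor `1 - αt` (strong
monotonicity of `∇f` together with its co-coercivity `‖∇f y - ∇f x‖² ≤ β⟪∇f y - ∇f x, y - x⟫`),
and the proximal map is nonexpansive. Since
`φ̄(s₂) - φ̄(s₁) = ⟪z₂⁺ - z₁⁺, x - c⟫ + (s₂ - s₁)‖x - c‖²` and `‖z₂ - z₁‖ = (s₂ - s₁)‖x - c‖`,
Cauchy–Schwarz leaves at least `(αt/2)(s₂ - s₁)‖x - c‖²`. -/

theorem ConvexOn.add_fderiv_sub_le {F : Type*} [NormedAddCommGroup F] [NormedSpace ℝ F]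
    {φ : F → ℝ} {φ' : F →L[ℝ] ℝ} {x : F}
    (hφ : ConvexOn ℝ univ φ) (hd : HasFDerivAt φ φ' x) (y : F) : φ x + φ' (y - x) ≤ φ y := by
  have hline : ConvexOn ℝ univ (φ ∘ AffineMap.lineMap (k := ℝ) x y) := by
    simpa using hφ.comp_affineMap (AffineMap.lineMap (k := ℝ) x y)
  have hderiv : HasDerivAt (φ ∘ AffineMap.lineMap (k := ℝ) x y) (φ' (y - x)) 0 := by
    refine HasFDerivAt.comp_hasDerivAt (0 : ℝ) ?_ AffineMap.hasDerivAt_lineMap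
    simpa using hd
  have := hline.le_slope_of_hasDerivAt (mem_univ 0) (mem_univ 1) one_pos hderiv
  simp only [slope_def_field, Function.comp_apply, AffineMap.lineMap_apply_zero,
    AffineMap.lineMap_apply_one, sub_zero, div_one] at this
  linarith

variable {E : Type*} [NormedAddCommGroup E] [InnerProductSpace ℝ E]

section Prox

def IsProxPoint (g : E → ℝ) (v p : E) : Prop :=
  IsMinOn (fun u => g u + ‖u - v‖ ^ 2 / 2) univ p

variable {g : E → ℝ}

/-- The optimality condition `v - p ∈ ∂g(p)` of the proximal point `p` of `v`. -/
theorem IsProxPoint.add_inner_sub_le (hg : ConvexOn ℝ univ g) {v p : E}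
    (hp : IsProxPoint g v p) (u : E) : g p + ⟪v - p, u - p⟫ ≤ g u := by
  have hsegment : ∀ l ∈ Ioo (0 : ℝ) 1, g p + ⟪v - p, u - p⟫ ≤ g u + l * (‖u - p‖ ^ 2 / 2) := by
    rintro l ⟨hl₀, hl₁⟩
    have hconv : g ((1 - l) • p + l • u) ≤ (1 - l) * g p + l * g u :=
      hg.2 (mem_univ p) (mem_univ u) (by linarith) hl₀.le (by ring)
    have hmin : g p + ‖p - v‖ ^ 2 / 2
        ≤ g ((1 - l) • p + l • u) + ‖(1 - l) • p + l • u - v‖ ^ 2 / 2 := hp (mem_univ _)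
    have hq : (1 - l) • p + l • u - v = (p - v) + l • (u - p) := by module
    rw [hq, norm_add_sq_real, norm_smul, real_inner_smul_right, Real.norm_of_nonneg hl₀.le] at hmin
    rw [← neg_sub p v, inner_neg_left]
    refine le_of_mul_le_mul_left ?_ hl₀
    nlinarith
  have hlim : Tendsto (fun l : ℝ => g u + l * (‖u - p‖ ^ 2 / 2)) (𝓝[>] 0) (𝓝 (g u)) :=
    tendsto_nhdsWithin_of_tendsto_nhds <|
      (by fun_prop : Continuous fun l : ℝ => g u + l * (‖u - p‖ ^ 2 / 2)).tendsto' 0 _ (by simp)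
  exact ge_of_tendsto hlim (eventually_of_mem (Ioo_mem_nhdsGT one_pos) hsegment)

theorem IsProxPoint.norm_sub_sq_le_inner (hg : ConvexOn ℝ univ g) {v₁ v₂ p₁ p₂ : E}
    (hp₁ : IsProxPoint g v₁ p₁) (hp₂ : IsProxPoint g v₂ p₂) :
    ‖p₁ - p₂‖ ^ 2 ≤ ⟪p₁ - p₂, v₁ - v₂⟫ := by
  have h₁ := hp₁.add_inner_sub_le hg p₂
  have h₂ := hp₂.add_inner_sub_le hg p₁
  have hsum : ⟪v₁ - p₁, p₂ - p₁⟫ + ⟪v₂ - p₂, p₁ - p₂⟫ = ‖p₁ - p₂‖ ^ 2 - ⟪p₁ - p₂, v₁ - v₂⟫ := by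
    rw [← real_inner_self_eq_norm_sq]
    simp only [inner_sub_left, inner_sub_right, real_inner_comm]
    ring
  linarith

theorem IsProxPoint.norm_sub_le (hg : ConvexOn ℝ univ g) {v₁ v₂ p₁ p₂ : E}
    (hp₁ : IsProxPoint g v₁ p₁) (hp₂ : IsProxPoint g v₂ p₂) : ‖p₁ - p₂‖ ≤ ‖v₁ - v₂‖ := by
  have hfirm := hp₁.norm_sub_sq_le_inner hg hp₂
  have hcs := real_inner_le_norm (p₁ - p₂) (v₁ - v₂)
  nlinarith [norm_nonneg (p₁ - p₂), norm_nonneg (v₁ - v₂)]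

end Prox

section Gradient

variable [CompleteSpace E] {f : E → ℝ}

theorem StrongConvexOn.add_inner_gradient_add_le {m : ℝ} {x : E}
    (hf : StrongConvexOn univ m f) (hd : DifferentiableAt ℝ f x) (y : E) :
    f x + ⟪gradient f x, y - x⟫ + m / 2 * ‖y - x‖ ^ 2 ≤ f y := by
  have hder : HasFDerivAt (fun z => f z - m / 2 * ‖z‖ ^ 2)
      (fderiv ℝ f x - (m / 2) • (2 • innerSL ℝ x)) x :=
    hd.hasFDerivAt.sub ((hasStrictFDerivAt_norm_sq x).hasFDerivAt.const_mul (m / 2))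
  have := (strongConvexOn_iff_convex.1 hf).add_fderiv_sub_le hder y
  simp only [sub_apply, smul_apply, innerSL_apply_apply, ← inner_gradient_left, smul_eq_mul,
    nsmul_eq_mul, Nat.cast_ofNat, inner_sub_right, real_inner_self_eq_norm_sq] at this
  rw [norm_sub_sq_real, real_inner_comm x y, inner_sub_right]
  linarith

theorem ConvexOn.add_inner_gradient_le (hf : ConvexOn ℝ univ f) {x : E}
    (hd : DifferentiableAt ℝ f x) (y : E) : f x + ⟪gradient f x, y - x⟫ ≤ f y := by
  simpa using (strongConvexOn_zero.2 hf).add_inner_gradient_add_le hd y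

theorem StrongConvexOn.mul_norm_sub_sq_le_inner_gradient_sub {m : ℝ}
    (hf : StrongConvexOn univ m f) (hd : Differentiable ℝ f) (x y : E) :
    m * ‖y - x‖ ^ 2 ≤ ⟪gradient f y - gradient f x, y - x⟫ := by
  have h₁ := hf.add_inner_gradient_add_le (hd x) y
  have h₂ := hf.add_inner_gradient_add_le (hd y) x
  rw [norm_sub_rev x y, ← neg_sub y x, inner_neg_right] at h₂
  rw [inner_sub_left]
  linarith

theorem LipschitzWith.le_add_inner_gradient_add_mul_norm_sq {K : ℝ≥0}
    (hd : Differentiable ℝ f) (hlip : LipschitzWith K (gradient f)) (x y : E) :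
    f y ≤ f x + ⟪gradient f x, y - x⟫ + K / 2 * ‖y - x‖ ^ 2 := by
  set d := y - x
  let g : ℝ → ℝ := fun s => f (x + s • d) - s * ⟪gradient f x, d⟫ - s ^ 2 * (K / 2 * ‖d‖ ^ 2)
  have hg : ∀ s, HasDerivAt g
      (⟪gradient f (x + s • d), d⟫ - ⟪gradient f x, d⟫ - 2 * s * (K / 2 * ‖d‖ ^ 2)) s := by
    intro s
    have hline : HasDerivAt (fun s : ℝ => x + s • d) d s := by
      simpa using ((hasDerivAt_id s).smul_const d).const_add x
    have hf := (hd (x + s • d)).hasFDerivAt.comp_hasDerivAt s hline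
    rw [← inner_gradient_left] at hf
    refine ((hf.sub ((hasDerivAt_id s).mul_const _)).sub
      ((hasDerivAt_pow 2 s).mul_const _)).congr_deriv ?_
    simp
  obtain ⟨c, hc, hslope⟩ := exists_hasDerivAt_eq_slope g _ one_pos
    (fun s _ => (hg s).continuousAt.continuousWithinAt) (fun s _ => hg s)
  have hgrad : ⟪gradient f (x + c • d) - gradient f x, d⟫ ≤ K * c * ‖d‖ ^ 2 := calc
    _ ≤ ‖gradient f (x + c • d) - gradient f x‖ * ‖d‖ := real_inner_le_norm _ _
    _ ≤ K * ‖c • d‖ * ‖d‖ := by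
        gcongr
        simpa using hlip.norm_sub_le (x + c • d) x
    _ = K * c * ‖d‖ ^ 2 := by rw [norm_smul, Real.norm_of_nonneg hc.1.le]; ring
  have hy : x + (1 : ℝ) • d = y := by simp [d]
  simp only [g, hy, zero_smul, add_zero, sub_zero, div_one] at hslope
  rw [inner_sub_left] at hgrad
  nlinarith

theorem ConvexOn.add_inner_gradient_add_inv_mul_norm_sq_le {K : ℝ≥0} (hf : ConvexOn ℝ univ f)
    (hd : Differentiable ℝ f) (hlip : LipschitzWith K (gradient f)) (x y : E) :
    f x + ⟪gradient f x, y - x⟫ + (2 * (K : ℝ))⁻¹ * ‖gradient f y - gradient f x‖ ^ 2 ≤ f y := by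
  set D := gradient f y - gradient f x
  set u := y - (K : ℝ)⁻¹ • D
  have hdescent := hlip.le_add_inner_gradient_add_mul_norm_sq hd y u
  have hconvex := hf.add_inner_gradient_le (hd x) u
  have hu : u - y = -((K : ℝ)⁻¹ • D) := by simp [u]
  have hux : u - x = (y - x) - (K : ℝ)⁻¹ • D := by module
  rw [hu, norm_neg, norm_smul, inner_neg_right, real_inner_smul_right] at hdescent
  rw [hux, inner_sub_right, real_inner_smul_right] at hconvex
  have hD : (K : ℝ)⁻¹ * ⟪gradient f y, D⟫ - (K : ℝ)⁻¹ * ⟪gradient f x, D⟫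
      = 2 * ((2 * (K : ℝ))⁻¹ * ‖D‖ ^ 2) := by
    rw [← mul_sub, ← inner_sub_left, real_inner_self_eq_norm_sq, mul_inv]
    ring
  have hK : (K : ℝ) / 2 * (‖(K : ℝ)⁻¹‖ * ‖D‖) ^ 2 = (2 * (K : ℝ))⁻¹ * ‖D‖ ^ 2 := by
    rcases eq_or_ne (K : ℝ) 0 with hK | hK
    · simp [hK]
    · rw [Real.norm_of_nonneg (by positivity)]
      field_simp
  linarith

/-- Co-coercivity of the gradient (Baillon–Haddad). -/
theorem ConvexOn.inv_mul_norm_gradient_sub_sq_le_inner {K : ℝ≥0} (hf : ConvexOn ℝ univ f)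
    (hd : Differentiable ℝ f) (hlip : LipschitzWith K (gradient f)) (x y : E) :
    (K : ℝ)⁻¹ * ‖gradient f y - gradient f x‖ ^ 2 ≤ ⟪gradient f y - gradient f x, y - x⟫ := by
  have h₁ := hf.add_inner_gradient_add_inv_mul_norm_sq_le hd hlip x y
  have h₂ := hf.add_inner_gradient_add_inv_mul_norm_sq_le hd hlip y x
  rw [norm_sub_rev (gradient f x), ← neg_sub y x, inner_neg_right] at h₂
  rw [inner_sub_left]
  rw [mul_inv] at h₁ h₂
  linarith

theorem StrongConvexOn.norm_gradient_step_sub_sq_le {m t : ℝ} {K : ℝ≥0}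
    (hf : StrongConvexOn univ m f) (hm : 0 ≤ m) (hd : Differentiable ℝ f)
    (hlip : LipschitzWith K (gradient f)) (ht₀ : 0 ≤ t) (ht : t ≤ (K : ℝ)⁻¹) (x y : E) :
    ‖(y - t • gradient f y) - (x - t • gradient f x)‖ ^ 2 ≤ (1 - t * m) * ‖y - x‖ ^ 2 := by
  have hmono := hf.mul_norm_sub_sq_le_inner_gradient_sub hd x y
  have hcoco := (strongConvexOn_zero.1 (hf.mono hm)).inv_mul_norm_gradient_sub_sq_le_inner
    hd hlip x y
  have hstep : (y - t • gradient f y) - (x - t • gradient f x)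
      = (y - x) - t • (gradient f y - gradient f x) := by module
  have ht_sq : t * ‖gradient f y - gradient f x‖ ^ 2
      ≤ (K : ℝ)⁻¹ * ‖gradient f y - gradient f x‖ ^ 2 :=
    mul_le_mul_of_nonneg_right ht (sq_nonneg _)
  rw [hstep, norm_sub_sq_real, norm_smul, real_inner_smul_right, Real.norm_of_nonneg ht₀,
    real_inner_comm]
  nlinarith

theorem norm_prox_gradient_step_sub_le {g : E → ℝ} {P : E → E} {m t : ℝ} {K : ℝ≥0}
    (hg : ConvexOn ℝ univ g) (hP : ∀ v, IsProxPoint g v (P v))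
    (hf : StrongConvexOn univ m f) (hm : 0 ≤ m) (hd : Differentiable ℝ f)
    (hlip : LipschitzWith K (gradient f)) (ht₀ : 0 ≤ t) (ht : t ≤ (K : ℝ)⁻¹) (htm : t * m ≤ 2)
    (x y : E) :
    ‖P (y - t • gradient f y) - P (x - t • gradient f x)‖ ≤ (1 - t * m / 2) * ‖y - x‖ := by
  rw [← sq_le_sq₀ (norm_nonneg _) (mul_nonneg (by linarith) (norm_nonneg _))]
  calc ‖P (y - t • gradient f y) - P (x - t • gradient f x)‖ ^ 2
      ≤ ‖(y - t • gradient f y) - (x - t • gradient f x)‖ ^ 2 := by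
        gcongr
        exact (hP _).norm_sub_le hg (hP _)
    _ ≤ (1 - t * m) * ‖y - x‖ ^ 2 := hf.norm_gradient_step_sub_sq_le hm hd hlip ht₀ ht x y
    _ ≤ ((1 - t * m / 2) * ‖y - x‖) ^ 2 := by nlinarith [sq_nonneg (t * m * ‖y - x‖)]

end Gradient

theorem stmt_7_general (n : ℕ) (α β t : ℝ) (hα : 0 < α) (hαβ : α ≤ β)
    (f h : EuclideanSpace ℝ (Fin n) → ℝ)
    (hsc : ConvexOn ℝ Set.univ (fun z => f z - α / 2 * ‖z‖ ^ 2))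
    (hf : Differentiable ℝ f)
    (hlip : LipschitzWith β.toNNReal (fun z => gradient f z))
    (hconv : ConvexOn ℝ Set.univ h)
    (ht : t ∈ Set.Ioc (0 : ℝ) (1 / β))
    (P : EuclideanSpace ℝ (Fin n) → EuclideanSpace ℝ (Fin n))
    (hP : ∀ v, IsMinOn (fun u => t * h u + ‖u - v‖ ^ 2 / 2) Set.univ (P v))
    (x c : EuclideanSpace ℝ (Fin n)) (hxc : x ≠ c)
    (φbar : ℝ → ℝ)
    (hφbar : ∀ s : ℝ,
      φbar s = ⟪P ((x + s • (c - x)) - t • gradient f (x + s • (c - x))) - (x + s • (c - x)),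
        x - c⟫) :
    ∀ s₁ s₂ : ℝ, s₁ < s₂ →
      φbar s₂ - φbar s₁ ≥ α * t / 2 * (s₂ - s₁) * ‖x - c‖ ^ 2
        ∧ 0 < α * t / 2 * (s₂ - s₁) * ‖x - c‖ ^ 2 := by
  intro s₁ s₂ hs
  obtain ⟨ht₀, htβ⟩ := ht
  have hβ : 0 < β := hα.trans_le hαβ
  have htK : t ≤ ((β.toNNReal : ℝ))⁻¹ := by rwa [Real.coe_toNNReal _ hβ.le, ← one_div]
  have htα : t * α ≤ 2 := by
    have : t * β ≤ 1 := by rwa [le_div_iff₀ hβ] at htβ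
    nlinarith
  have hxc' : 0 < ‖x - c‖ := norm_pos_iff.2 (sub_ne_zero.2 hxc)
  refine ⟨?_, by positivity⟩
  set z₁ := x + s₁ • (c - x)
  set z₂ := x + s₂ • (c - x)
  set p₁ := P (z₁ - t • gradient f z₁)
  set p₂ := P (z₂ - t • gradient f z₂)
  have hz : ‖z₂ - z₁‖ = (s₂ - s₁) * ‖x - c‖ := by
    rw [show z₂ - z₁ = (s₂ - s₁) • (c - x) by module, norm_smul,
      Real.norm_of_nonneg (sub_pos.2 hs).le, norm_sub_rev]
  have hp : ‖p₂ - p₁‖ ≤ (1 - t * α / 2) * ((s₂ - s₁) * ‖x - c‖) := by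
    rw [← hz]
    exact norm_prox_gradient_step_sub_le (hconv.smul ht₀.le) hP
      (strongConvexOn_iff_convex.2 hsc) hα.le hf hlip ht₀.le htK htα z₁ z₂
  have hdiff : φbar s₂ - φbar s₁ = ⟪p₂ - p₁, x - c⟫ + (s₂ - s₁) * ‖x - c‖ ^ 2 := by
    rw [hφbar, hφbar, ← inner_sub_left, ← real_inner_self_eq_norm_sq, ← real_inner_smul_left,
      ← inner_add_left]
    congr 1
    module
  have hcs : -(‖p₂ - p₁‖ * ‖x - c‖) ≤ ⟪p₂ - p₁, x - c⟫ :=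
    neg_le_of_abs_le (abs_real_inner_le_norm _ _)
  rw [ge_iff_le, hdiff]
  nlinarith [mul_le_mul_of_nonneg_right hp hxc'.le]

/-- Lemma 3.3(ii): strict monotonicity of
`φ̄_{t,x,c}(s) = ⟨z⁺ − z, x − c⟩` at `z = x + s(c − x)`, where `z⁺ = P (z − t∇f(z))`
and `P v = Prox_{th}(v)`. Quantitatively, for `s₁ < s₂`,
`φ̄(s₂) − φ̄(s₁) ≥ (αt/2)(s₂ − s₁)‖x − c‖² > 0`. -/
theorem stmt_7 (n : ℕ) (α β t : ℝ) (hα : 0 < α) (hαβ : α ≤ β)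
    (f h : EuclideanSpace ℝ (Fin n) → ℝ)
    (hsc : ConvexOn ℝ Set.univ (fun z => f z - α / 2 * ‖z‖ ^ 2))
    (hf : Differentiable ℝ f)
    (hlip : LipschitzWith β.toNNReal (fun z => gradient f z))
    (hconv : ConvexOn ℝ Set.univ h) (hlsc : LowerSemicontinuous h)
    (ht : t ∈ Set.Ioc (0 : ℝ) (1 / β))
    (P : EuclideanSpace ℝ (Fin n) → EuclideanSpace ℝ (Fin n))
    (hP : ∀ v, IsMinOn (fun u => t * h u + ‖u - v‖ ^ 2 / 2) Set.univ (P v))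
    (x c : EuclideanSpace ℝ (Fin n)) (hxc : x ≠ c)
    (φbar : ℝ → ℝ)
    (hφbar : ∀ s : ℝ,
      φbar s = ⟪P ((x + s • (c - x)) - t • gradient f (x + s • (c - x))) - (x + s • (c - x)),
        x - c⟫) :
    ∀ s₁ s₂ : ℝ, s₁ < s₂ →
      φbar s₂ - φbar s₁ ≥ α * t / 2 * (s₂ - s₁) * ‖x - c‖ ^ 2
        ∧ 0 < α * t / 2 * (s₂ - s₁) * ‖x - c‖ ^ 2 :=
  stmt_7_general n α β t hα hαβ f h hsc hf hlip hconv ht P hP x c hxc φbar hφbar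
end

section
/- (Convergence of limited-memory GeoPG.) Let t = 1/β, κ = β/α, and a memory size m ≥ 1. Let {x_k}_{k≥0}, {c_k}_{k≥0} ⊆ ℝ^n and {R_k²}_{k≥0} ⊆ ℝ be sequences with c_0 = x_0^{++}, R_0² = (1 − 1/κ)·‖G_t(x_0)‖²/α², and set r_k² := (1 − 1/κ)·‖G_t(x_k)‖²/α² and Q_k := ∩_{i=max(1,k−m+1)}^{k} B(x_i^{++}, r_i²). Assume for every k ≥ 1: (a) F(x_k⁺) ≤ F(x_{k−1}⁺) − (t/2)·‖G_t(x_k)‖² and ‖x_k^{++} − c_{k−1}‖² ≥ ‖G_t(x_k)‖²/α²; (b) R_k² = (1 − 1/√κ)·R_{k−1}² and, for every δ ≥ 0, B(c_{k−1}, R_{k−1}² − (t/α)·‖G_t(x_k)‖² − δ) ∩ B(x_k^{++}, r_k² − δ) ⊆ B(c_k, R_k² − δ). Then for every k ≥ 1, Q_k ⊆ B(x_k^{++}, r_k²), B(c_k, R_k²) ⊇ B(c_{k−1}, R_{k−1}² − (t/α)·‖G_t(x_k)‖²) ∩ Q_k, x* ∈ B(c_k, R_k²), and ‖x* − c_k‖²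 ≤ (1 − 1/√κ)^k · R_0². -/
open scoped RealInnerProductSpace

/-!
The proximal-gradient step with `t = 1/β` satisfies, for every `z`,
`F(x⁺) ≤ F(z) − ⟪G_t(x), z − x⟫ − (t/2)‖G_t(x)‖² − (α/2)‖z − x‖²`
(strong convexity of `f` below, the descent lemma above, and the variational inequality of the
prox). Taking `z = x*` and completing the square gives
`x* ∈ B(x^{++}, r² − e)` with `e = (2/α)(F(x⁺) − F*) ≥ 0`. By the sufficient decrease (a), the gap
`e_k` is a slack `δ` admissible in (b), so by induction `x* ∈ B(c_k, R_k² − e_k) ⊆ B(c_k, R_k²)`,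
while `R_k²` decays geometrically by (b).
-/

open Set Filter Topology
open scoped NNReal

theorem ConvexOn.add_fderiv_sub_le_s15 {E : Type*} [NormedAddCommGroup E] [NormedSpace ℝ E]
    {g : E → ℝ} {g' : E →L[ℝ] ℝ} {w : E} (hg : ConvexOn ℝ univ g) (hd : HasFDerivAt g g' w)
    (z : E) : g w + g' (z - w) ≤ g z := by
  have hline : ConvexOn ℝ univ (g ∘ (AffineMap.lineMap w z : ℝ →ᵃ[ℝ] E)) := by
    simpa using hg.comp_affineMap (AffineMap.lineMap w z)
  have hderiv : HasDerivAt (g ∘ (AffineMap.lineMap w z : ℝ →ᵃ[ℝ] E)) (g' (z - w)) 0 := by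
    apply hd.comp_hasDerivAt_of_eq 0 (AffineMap.hasDerivAt_lineMap (a := w) (b := z))
    simp
  have := hline.le_slope_of_hasDerivAt (mem_univ 0) (mem_univ 1) zero_lt_one hderiv
  simp only [slope_def_field, Function.comp_apply, AffineMap.lineMap_apply_one,
    AffineMap.lineMap_apply_zero, sub_zero, div_one] at this
  linarith

section InnerProductSpace

variable {E : Type*} [NormedAddCommGroup E] [InnerProductSpace ℝ E]

theorem ConvexOn.inner_sub_le_of_isMinOn_prox {h : E → ℝ} (hconv : ConvexOn ℝ univ h) {t : ℝ}
    (ht : 0 ≤ t) {v p : E} (hp : IsMinOn (fun u => t * h u + ‖u - v‖ ^ 2 / 2) univ p) (z : E) :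
    t * h p + ⟪v - p, z - p⟫ ≤ t * h z := by
  set a := t * (h z - h p) - ⟪v - p, z - p⟫
  have hstep : ∀ l ∈ Ioo (0 : ℝ) 1, 0 ≤ a + l / 2 * ‖z - p‖ ^ 2 := by
    rintro l ⟨hl0, hl1⟩
    have hmin := isMinOn_iff.mp hp (p + l • (z - p)) (mem_univ _)
    have hcvx : h (p + l • (z - p)) ≤ (1 - l) * h p + l * h z := by
      have := hconv.2 (mem_univ p) (mem_univ z) (sub_nonneg.2 hl1.le) hl0.le (by ring)
      rwa [show (1 - l) • p + l • z = p + l • (z - p) by module] at this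
    have hsq : ‖p + l • (z - p) - v‖ ^ 2
        = ‖p - v‖ ^ 2 - 2 * (l * ⟪v - p, z - p⟫) + l ^ 2 * ‖z - p‖ ^ 2 := by
      rw [show p + l • (z - p) - v = -(v - p) + l • (z - p) by module, norm_add_sq_real,
        inner_neg_left, real_inner_smul_right, norm_smul, norm_neg, Real.norm_eq_abs, mul_pow,
        sq_abs, norm_sub_rev v p]
      ring
    simp only [hsq] at hmin
    have : 0 ≤ l * (a + l / 2 * ‖z - p‖ ^ 2) := by
      nlinarith [mul_le_mul_of_nonneg_left hcvx ht]
    exact nonneg_of_mul_nonneg_right this hl0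
  -- let `l → 0⁺` in the first-order expansion along the segment from `p` to `z`
  have hlim : Tendsto (fun l : ℝ => a + l / 2 * ‖z - p‖ ^ 2) (𝓝[>] 0) (𝓝 a) := by
    apply tendsto_nhdsWithin_of_tendsto_nhds
    simpa using ((continuous_id.div_const 2).mul continuous_const).const_add a |>.tendsto 0
  have := ge_of_tendsto hlim (eventually_of_mem (Ioo_mem_nhdsGT one_pos) hstep)
  linarith

variable [CompleteSpace E]

theorem add_inner_gradient_add_le_of_convexOn_sub_sq {f : E → ℝ} {α : ℝ}
    (hsc : ConvexOn ℝ univ (fun z => f z - α / 2 * ‖z‖ ^ 2)) {w : E} (hf : DifferentiableAt ℝ f w)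
    (z : E) : f w + ⟪gradient f w, z - w⟫ + α / 2 * ‖z - w‖ ^ 2 ≤ f z := by
  have hd := hf.hasFDerivAt.sub ((hasStrictFDerivAt_norm_sq w).hasFDerivAt.const_mul (α / 2))
  have := hsc.add_fderiv_sub_le_s15 hd z
  have hsq : ‖z‖ ^ 2 = ‖w‖ ^ 2 + 2 * ⟪w, z - w⟫ + ‖z - w‖ ^ 2 := by
    rw [← norm_add_sq_real, add_sub_cancel]
  simp only [sub_apply, smul_apply, innerSL_apply_apply,
    ← inner_gradient_left, smul_eq_mul, nsmul_eq_mul] at this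
  rw [hsq] at this
  linarith

theorem le_add_inner_gradient_add_of_lipschitzWith {f : E → ℝ} {K : ℝ≥0}
    (hf : Differentiable ℝ f) (hlip : LipschitzWith K (gradient f)) (w z : E) :
    f z ≤ f w + ⟪gradient f w, z - w⟫ + K / 2 * ‖z - w‖ ^ 2 := by
  set v := z - w
  set φ : ℝ → ℝ := fun s => f (w + s • v) - s * ⟪gradient f w, v⟫ - K / 2 * s ^ 2 * ‖v‖ ^ 2
  have hφ : ∀ s, HasDerivAt φ
      (⟪gradient f (w + s • v), v⟫ - ⟪gradient f w, v⟫ - K * s * ‖v‖ ^ 2) s := by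
    intro s
    have hline : HasDerivAt (fun s : ℝ => w + s • v) v s := by
      simpa using ((hasDerivAt_id s).smul_const v).const_add w
    have hfline := (hf _).hasGradientAt.hasFDerivAt.comp_hasDerivAt s hline
    simp only [InnerProductSpace.toDual_apply_apply] at hfline
    have h := (hfline.sub ((hasDerivAt_id s).mul_const ⟪gradient f w, v⟫)).sub
      (((hasDerivAt_pow 2 s).const_mul (K / 2 : ℝ)).mul_const (‖v‖ ^ 2))
    exact h.congr_deriv (by simp only [one_mul, Nat.cast_ofNat, Nat.add_one_sub_one, pow_one]; ring)
  have hanti : AntitoneOn φ (Icc 0 1) := by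
    refine antitoneOn_of_hasDerivWithinAt_nonpos (convex_Icc 0 1)
      (fun s _ => (hφ s).continuousAt.continuousWithinAt) (fun s _ => (hφ s).hasDerivWithinAt)
      fun s hs => ?_
    rw [interior_Icc] at hs
    have hgrad : ‖gradient f (w + s • v) - gradient f w‖ ≤ K * (s * ‖v‖) := by
      simpa [norm_smul, abs_of_pos hs.1] using hlip.norm_sub_le (w + s • v) w
    have := real_inner_le_norm (gradient f (w + s • v) - gradient f w) v
    rw [inner_sub_left] at this
    nlinarith [norm_nonneg v]
  have := hanti (left_mem_Icc.2 zero_le_one) (right_mem_Icc.2 zero_le_one) zero_le_one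
  simp only [φ, zero_smul, one_smul, add_zero, zero_mul, one_mul, sub_zero, ne_eq,
    OfNat.ofNat_ne_zero, not_false_eq_true, zero_pow, mul_zero, one_pow, mul_one] at this
  rw [show w + v = z from add_sub_cancel w z] at this
  linarith

theorem prox_gradient_step_le {f h : E → ℝ} {α t : ℝ} {K : ℝ≥0}
    (hsc : ConvexOn ℝ univ (fun z => f z - α / 2 * ‖z‖ ^ 2)) (hf : Differentiable ℝ f)
    (hlip : LipschitzWith K (gradient f)) (hconv : ConvexOn ℝ univ h) (ht : 0 < t)
    (htK : t * K ≤ 1) {x p G : E}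
    (hp : IsMinOn (fun u => t * h u + ‖u - (x - t • gradient f x)‖ ^ 2 / 2) univ p)
    (hG : G = t⁻¹ • (x - p)) (z : E) :
    f p + h p ≤ f z + h z - ⟪G, z - x⟫ - t / 2 * ‖G‖ ^ 2 - α / 2 * ‖z - x‖ ^ 2 := by
  have hpG : p = x - t • G := by rw [hG, smul_smul, mul_inv_cancel₀ ht.ne', one_smul]; abel
  set g := gradient f x
  have hlower := add_inner_gradient_add_le_of_convexOn_sub_sq hsc (hf x) z
  have hupper := le_add_inner_gradient_add_of_lipschitzWith hf hlip x p
  have hprox := hconv.inner_sub_le_of_isMinOn_prox ht.le hp z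
  have hquad : K / 2 * ‖p - x‖ ^ 2 ≤ t / 2 * ‖G‖ ^ 2 := by
    rw [hpG, sub_sub_cancel_left, norm_neg, norm_smul, Real.norm_eq_abs, abs_of_pos ht]
    nlinarith [sq_nonneg ‖G‖]
  have e1 : ⟪g, p - x⟫ = -(t * ⟪g, G⟫) := by
    rw [hpG, sub_sub_cancel_left, inner_neg_right, real_inner_smul_right]
  have e2 : ⟪x - t • g - p, z - p⟫
      = t * ⟪G, z - x⟫ - t * ⟪g, z - x⟫ + t ^ 2 * ‖G‖ ^ 2 - t ^ 2 * ⟪g, G⟫ := by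
    rw [hpG, show x - t • g - (x - t • G) = t • (G - g) by module,
      show z - (x - t • G) = (z - x) + t • G by abel]
    simp only [inner_smul_left, inner_add_right, inner_sub_left, inner_smul_right,
      real_inner_self_eq_norm_sq, RCLike.conj_to_real]
    ring
  rw [e2] at hprox
  have hprox' : h p + ⟪G, z - x⟫ - ⟪g, z - x⟫ + t * ‖G‖ ^ 2 - t * ⟪g, G⟫ ≤ h z := by
    refine (mul_le_mul_iff_right₀ ht).mp ?_
    linarith
  linarith

theorem norm_sub_sq_le_of_prox_gradient_step {f h : E → ℝ} {α t : ℝ} {K : ℝ≥0} (hα : 0 < α)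
    (hsc : ConvexOn ℝ univ (fun z => f z - α / 2 * ‖z‖ ^ 2)) (hf : Differentiable ℝ f)
    (hlip : LipschitzWith K (gradient f)) (hconv : ConvexOn ℝ univ h) (ht : 0 < t)
    (htK : t * K ≤ 1) {x p G : E}
    (hp : IsMinOn (fun u => t * h u + ‖u - (x - t • gradient f x)‖ ^ 2 / 2) univ p)
    (hG : G = t⁻¹ • (x - p)) (z : E) :
    ‖z - (x - α⁻¹ • G)‖ ^ 2
      ≤ (1 - t * α) * ‖G‖ ^ 2 / α ^ 2 - 2 / α * (f p + h p - (f z + h z)) := by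
  have hstep := prox_gradient_step_le hsc hf hlip hconv ht htK hp hG z
  have hsq : ‖z - (x - α⁻¹ • G)‖ ^ 2
      = ‖z - x‖ ^ 2 + 2 / α * ⟪G, z - x⟫ + ‖G‖ ^ 2 / α ^ 2 := by
    rw [show z - (x - α⁻¹ • G) = (z - x) + α⁻¹ • G by abel, norm_add_sq_real,
      real_inner_smul_right, norm_smul, Real.norm_eq_abs, mul_pow, sq_abs, real_inner_comm]
    ring
  have hscaled := mul_le_mul_of_nonneg_left hstep (by positivity : (0 : ℝ) ≤ 2 / α)
  rw [hsq]
  field_simp at hscaled ⊢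
  linear_combination α * hscaled

end InnerProductSpace

section Balls

variable {n : ℕ}

theorem B_mono {c : EuclideanSpace ℝ (Fin n)} {r s : ℝ} (hrs : r ≤ s) : B c r ⊆ B c s :=
  fun _ hy => le_trans hy hrs

theorem mem_B_of_ball_update {z : EuclideanSpace ℝ (Fin n)} {c y : ℕ → EuclideanSpace ℝ (Fin n)}
    {R2 r2 d e : ℕ → ℝ} (he : ∀ k, 0 ≤ e k) (hdesc : ∀ k, e (k + 1) + d (k + 1) ≤ e k)
    (hy : ∀ k, z ∈ B (y k) (r2 k - e k)) (h0 : z ∈ B (c 0) (R2 0 - e 0))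
    (hupd : ∀ k δ, 0 ≤ δ → B (c k) (R2 k - d (k + 1) - δ) ∩ B (y (k + 1)) (r2 (k + 1) - δ)
      ⊆ B (c (k + 1)) (R2 (k + 1) - δ))
    (k : ℕ) : z ∈ B (c k) (R2 k - e k) := by
  induction k with
  | zero => exact h0
  | succ k ih =>
    refine hupd k (e (k + 1)) (he _) ⟨B_mono ?_ ih, hy (k + 1)⟩
    linarith [hdesc k]

end Balls

theorem eq_pow_mul_of_succ_eq_mul {M : Type*} [Monoid M] {u : ℕ → M} {q : M}
    (hu : ∀ k, u (k + 1) = q * u k) (k : ℕ) : u k = q ^ k * u 0 := by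
  induction k with
  | zero => simp
  | succ k ih => rw [hu, ih, pow_succ', mul_assoc]

theorem stmt_15_general (n : ℕ) (α β t κ : ℝ) (hα : 0 < α) (hαβ : α ≤ β)
    (ht : t = 1 / β) (hκ : κ = β / α) (m : ℕ) (hm : 1 ≤ m)
    (f h : EuclideanSpace ℝ (Fin n) → ℝ)
    (hsc : ConvexOn ℝ Set.univ (fun z => f z - α / 2 * ‖z‖ ^ 2))
    (hf : Differentiable ℝ f)
    (hlip : LipschitzWith β.toNNReal (fun z => gradient f z))
    (hconv : ConvexOn ℝ Set.univ h)
    (xstar : EuclideanSpace ℝ (Fin n))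
    (hmin : IsMinOn (fun z => f z + h z) Set.univ xstar)
    (P : EuclideanSpace ℝ (Fin n) → EuclideanSpace ℝ (Fin n))
    (hP : ∀ v, IsMinOn (fun u => t * h u + ‖u - v‖ ^ 2 / 2) Set.univ (P v))
    (x c xp G xpp : ℕ → EuclideanSpace ℝ (Fin n)) (R2 r2 : ℕ → ℝ)
    (Q : ℕ → Set (EuclideanSpace ℝ (Fin n)))
    (hxp : ∀ k, xp k = P (x k - t • gradient f (x k)))
    (hG : ∀ k, G k = t⁻¹ • (x k - xp k))
    (hxpp : ∀ k, xpp k = x k - α⁻¹ • G k)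
    (hr2 : ∀ k, r2 k = (1 - 1 / κ) * ‖G k‖ ^ 2 / α ^ 2)
    (hQ : ∀ k, Q k = ⋂ i ∈ Finset.Icc (k - m + 1) k, B (xpp i) (r2 i))
    (hc0 : c 0 = xpp 0)
    (hR0 : R2 0 = (1 - 1 / κ) * ‖G 0‖ ^ 2 / α ^ 2)
    (ha : ∀ k, 1 ≤ k →
      f (xp k) + h (xp k) ≤ (f (xp (k - 1)) + h (xp (k - 1))) - t / 2 * ‖G k‖ ^ 2
        ∧ ‖xpp k - c (k - 1)‖ ^ 2 ≥ ‖G k‖ ^ 2 / α ^ 2)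
    (hb1 : ∀ k, 1 ≤ k → R2 k = (1 - 1 / Real.sqrt κ) * R2 (k - 1))
    (hb2 : ∀ k, 1 ≤ k → ∀ δ : ℝ, 0 ≤ δ →
      B (c (k - 1)) (R2 (k - 1) - t / α * ‖G k‖ ^ 2 - δ) ∩ B (xpp k) (r2 k - δ)
        ⊆ B (c k) (R2 k - δ)) :
    ∀ k : ℕ, 1 ≤ k →
      Q k ⊆ B (xpp k) (r2 k)
        ∧ B (c (k - 1)) (R2 (k - 1) - t / α * ‖G k‖ ^ 2) ∩ Q k ⊆ B (c k) (R2 k)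
        ∧ xstar ∈ B (c k) (R2 k)
        ∧ ‖xstar - c k‖ ^ 2 ≤ (1 - 1 / Real.sqrt κ) ^ k * R2 0 := by
  have hβ : 0 < β := hα.trans_le hαβ
  have ht0 : 0 < t := by rw [ht]; positivity
  have htβ : t * β.toNNReal ≤ 1 := by rw [Real.coe_toNNReal _ hβ.le, ht, one_div_mul_cancel hβ.ne']
  have hκt : 1 - 1 / κ = 1 - t * α := by rw [hκ, ht]; field_simp
  set e : ℕ → ℝ := fun k => 2 / α * (f (xp k) + h (xp k) - (f xstar + h xstar))
  have he : ∀ k, 0 ≤ e k := fun k =>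
    mul_nonneg (by positivity) (sub_nonneg.2 (hmin (Set.mem_univ (xp k))))
  have hball : ∀ k, xstar ∈ B (xpp k) (r2 k - e k) := fun k => by
    have := norm_sub_sq_le_of_prox_gradient_step hα hsc hf hlip hconv ht0 htβ (hxp k ▸ hP _)
      (hG k) xstar
    rwa [← hxpp k, ← hκt, ← hr2 k] at this
  have hcenter : ∀ k, xstar ∈ B (c k) (R2 k - e k) := by
    refine mem_B_of_ball_update (d := fun k => t / α * ‖G k‖ ^ 2) he (fun k => ?_) hball ?_
      (fun k => by simpa using hb2 (k + 1) (by omega))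
    · have := (ha (k + 1) (by omega)).1
      simp only [e, add_tsub_cancel_right] at this ⊢
      field_simp
      linarith
    · rw [hc0, hR0, ← hr2 0]
      exact hball 0
  intro k hk
  have hQk : Q k ⊆ B (xpp k) (r2 k) := by
    rw [hQ k]
    exact Set.biInter_subset_of_mem (Finset.mem_Icc.2 ⟨by omega, le_rfl⟩)
  have hRk : R2 k = (1 - 1 / Real.sqrt κ) ^ k * R2 0 :=
    eq_pow_mul_of_succ_eq_mul (fun j => by simpa using hb1 (j + 1) (by omega)) k
  have hmem : xstar ∈ B (c k) (R2 k) := B_mono (by linarith [he k]) (hcenter k)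
  have hupd := hb2 k hk 0 le_rfl
  simp only [sub_zero] at hupd
  exact ⟨hQk, fun y hy => hupd ⟨hy.1, hQk hy.2⟩, hmem, hRk ▸ hmem⟩

/-- convergence of limited-memory GeoPG with `t = 1/β` and `κ = β/α`.
Here `P v = Prox_{th}(v)`, `xp k = (x k)⁺`, `G k = G_t(x k)`, `xpp k = (x k)^{++}`,
`r2 k = (1 − 1/κ)‖G k‖²/α²`, `Q k = ∩_{i = max(1, k−m+1)}^{k} B(xpp i, r2 i)`
(natural subtraction makes `k − m + 1 = max(1, k − m + 1)`), and `F = f + h` with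
minimizer `x*`. -/
theorem stmt_15 (n : ℕ) (α β t κ : ℝ) (hα : 0 < α) (hαβ : α ≤ β)
    (ht : t = 1 / β) (hκ : κ = β / α) (m : ℕ) (hm : 1 ≤ m)
    (f h : EuclideanSpace ℝ (Fin n) → ℝ)
    (hsc : ConvexOn ℝ Set.univ (fun z => f z - α / 2 * ‖z‖ ^ 2))
    (hf : Differentiable ℝ f)
    (hlip : LipschitzWith β.toNNReal (fun z => gradient f z))
    (hconv : ConvexOn ℝ Set.univ h) (hlsc : LowerSemicontinuous h)
    (xstar : EuclideanSpace ℝ (Fin n))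
    (hmin : IsMinOn (fun z => f z + h z) Set.univ xstar)
    (P : EuclideanSpace ℝ (Fin n) → EuclideanSpace ℝ (Fin n))
    (hP : ∀ v, IsMinOn (fun u => t * h u + ‖u - v‖ ^ 2 / 2) Set.univ (P v))
    (x c xp G xpp : ℕ → EuclideanSpace ℝ (Fin n)) (R2 r2 : ℕ → ℝ)
    (Q : ℕ → Set (EuclideanSpace ℝ (Fin n)))
    (hxp : ∀ k, xp k = P (x k - t • gradient f (x k)))
    (hG : ∀ k, G k = t⁻¹ • (x k - xp k))
    (hxpp : ∀ k, xpp k = x k - α⁻¹ • G k)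
    (hr2 : ∀ k, r2 k = (1 - 1 / κ) * ‖G k‖ ^ 2 / α ^ 2)
    (hQ : ∀ k, Q k = ⋂ i ∈ Finset.Icc (k - m + 1) k, B (xpp i) (r2 i))
    (hc0 : c 0 = xpp 0)
    (hR0 : R2 0 = (1 - 1 / κ) * ‖G 0‖ ^ 2 / α ^ 2)
    (ha : ∀ k, 1 ≤ k →
      f (xp k) + h (xp k) ≤ (f (xp (k - 1)) + h (xp (k - 1))) - t / 2 * ‖G k‖ ^ 2
        ∧ ‖xpp k - c (k - 1)‖ ^ 2 ≥ ‖G k‖ ^ 2 / α ^ 2)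
    (hb1 : ∀ k, 1 ≤ k → R2 k = (1 - 1 / Real.sqrt κ) * R2 (k - 1))
    (hb2 : ∀ k, 1 ≤ k → ∀ δ : ℝ, 0 ≤ δ →
      B (c (k - 1)) (R2 (k - 1) - t / α * ‖G k‖ ^ 2 - δ) ∩ B (xpp k) (r2 k - δ)
        ⊆ B (c k) (R2 k - δ)) :
    ∀ k : ℕ, 1 ≤ k →
      Q k ⊆ B (xpp k) (r2 k)
        ∧ B (c (k - 1)) (R2 (k - 1) - t / α * ‖G k‖ ^ 2) ∩ Q k ⊆ B (c k) (R2 k)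
        ∧ xstar ∈ B (c k) (R2 k)
        ∧ ‖xstar - c k‖ ^ 2 ≤ (1 - 1 / Real.sqrt κ) ^ k * R2 0 :=
  stmt_15_general n α β t κ hα hαβ ht hκ m hm f h hsc hf hlip hconv xstar hmin P hP x c xp G xpp R2
    r2 Q hxp hG hxpp hr2 hQ hc0 hR0 ha hb1 hb2
end

section
/- For every x ∈ ℝ^n, with x⁺ := x − ∇f(x)/β and x^{++} := x − ∇f(x)/α, the minimizer x* of f satisfies ‖x* − x^{++}‖² ≤ (1 − 1/κ)·‖∇f(x)‖²/α² − (2/α)·(f(x⁺) − f*), where κ := β/α. -/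
open scoped RealInnerProductSpace


variable {E : Type*} [NormedAddCommGroup E] [InnerProductSpace ℝ E] [CompleteSpace E]

lemma my_inner_gradient (f : E → ℝ) (x v : E) : ⟪gradient f x, v⟫ = fderiv ℝ f x v := by
  rw [gradient]
  exact InnerProductSpace.toDual_symm_apply

lemma my_curve (x v : E) (t : ℝ) : HasDerivAt (fun s : ℝ => x + s • v) v t := by
  simpa using ((hasDerivAt_id t).smul_const v).const_add x

lemma my_comp {f : E → ℝ} (hf : Differentiable ℝ f) (x v : E) (t : ℝ) :
    HasDerivAt (fun s : ℝ => f (x + s • v)) ⟪gradient f (x + t • v), v⟫ t := by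
  rw [my_inner_gradient]
  exact (hf _).hasFDerivAt.comp_hasDerivAt t (my_curve x v t)

lemma my_slope {φ : ℝ → ℝ} (hc : ConvexOn ℝ Set.univ φ) {d : ℝ}
    (hd : HasDerivAt φ d 0) : d ≤ φ 1 - φ 0 := by
  have := hc.le_slope_of_hasDerivAt (Set.mem_univ 0) (Set.mem_univ 1) one_pos hd
  simpa [slope_def_field] using this

lemma my_comp_convex {h : E → ℝ} (hc : ConvexOn ℝ Set.univ h) (x v : E) :
    ConvexOn ℝ Set.univ (fun t : ℝ => h (x + t • v)) := by
  have := hc.comp_affineMap (AffineMap.lineMap x (x + v))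
  have he : (fun t : ℝ => h (x + t • v)) = (h ∘ AffineMap.lineMap x (x + v)) := by
    funext t
    show h _ = h _
    congr 1
    rw [AffineMap.lineMap_apply_module]
    module
  rw [he]
  simpa using this

lemma my_strong {f : E → ℝ} {α : ℝ}
    (hsc : ConvexOn ℝ Set.univ (fun z => f z - α / 2 * ‖z‖ ^ 2))
    (hf : Differentiable ℝ f) (x y : E) :
    f x + ⟪gradient f x, y - x⟫ + α / 2 * ‖y - x‖ ^ 2 ≤ f y := by
  set v := y - x with hv
  have hconv := my_comp_convex hsc x v
  have hn : ∀ t : ℝ, HasDerivAt (fun s : ℝ => ‖x + s • v‖ ^ 2)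
      (⟪x + t • v, v⟫ + ⟪v, x + t • v⟫) t := by
    intro t
    have : HasDerivAt (fun s : ℝ => ⟪x + s • v, x + s • v⟫)
        (⟪x + t • v, v⟫ + ⟪v, x + t • v⟫) t :=
      HasDerivAt.inner ℝ (my_curve x v t) (my_curve x v t)
    refine this.congr_deriv rfl |>.congr_of_eventuallyEq ?_
    filter_upwards with s
    rw [real_inner_self_eq_norm_sq]
  have hder : HasDerivAt (fun t : ℝ => f (x + t • v) - α / 2 * ‖x + t • v‖ ^ 2)
      (⟪gradient f x, v⟫ - α / 2 * (⟪x, v⟫ + ⟪v, x⟫)) 0 := by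
    have h1 := my_comp hf x v 0
    have h2 := (hn 0).const_mul (α / 2)
    simp only [zero_smul, add_zero] at h1 h2
    exact h1.sub h2
  have hs := my_slope hconv hder
  simp only [one_smul, zero_smul, add_zero] at hs
  have hxy : x + v = y := by rw [hv]; abel
  rw [hxy] at hs
  have e1 : ‖v‖ ^ 2 = ‖y‖ ^ 2 - 2 * ⟪y, x⟫ + ‖x‖ ^ 2 := by
    rw [hv]; exact norm_sub_sq_real y x
  have e2 : ⟪x, v⟫ = ⟪x, y⟫ - ‖x‖ ^ 2 := by
    rw [hv, inner_sub_right, real_inner_self_eq_norm_sq]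
  have e3 : ⟪x, y⟫ = ⟪y, x⟫ := real_inner_comm y x
  have e4 : ⟪v, x⟫ = ⟪x, v⟫ := real_inner_comm x v
  have hsum : ⟪x, v⟫ + ⟪v, x⟫ = ‖y‖ ^ 2 - ‖x‖ ^ 2 - ‖v‖ ^ 2 := by linarith
  rw [hsum] at hs
  linarith

lemma my_descent {f : E → ℝ} {β : ℝ} (hβ : 0 < β) (hf : Differentiable ℝ f)
    (hlip : LipschitzWith β.toNNReal (fun z => gradient f z)) (x y : E) :
    f y ≤ f x + ⟪gradient f x, y - x⟫ + β / 2 * ‖y - x‖ ^ 2 := by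
  set v := y - x with hv
  set c1 : ℝ := β * ‖v‖ ^ 2 / 2 with hc1
  set c2 : ℝ := ⟪gradient f x, v⟫ with hc2
  set φ : ℝ → ℝ := fun t => c1 * t ^ 2 + c2 * t - f (x + t • v) with hφ
  have hder : ∀ t : ℝ, HasDerivAt φ
      (c1 * (2 * t) + c2 - ⟪gradient f (x + t • v), v⟫) t := by
    intro t
    have h1 : HasDerivAt (fun t : ℝ => c1 * t ^ 2) (c1 * (2 * t)) t := by
      simpa using (hasDerivAt_pow 2 t).const_mul c1
    have h2 : HasDerivAt (fun t : ℝ => c2 * t) c2 t := by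
      simpa using (hasDerivAt_id t).const_mul c2
    exact (h1.add h2).sub (my_comp hf x v t)
  have hmono : MonotoneOn φ (Set.Icc (0:ℝ) 1) := by
    apply monotoneOn_of_hasDerivWithinAt_nonneg (convex_Icc 0 1)
      (fun t _ => ((hder t).continuousAt.continuousWithinAt))
      (fun t ht => ((hder t).hasDerivWithinAt))
    intro t ht
    rw [interior_Icc] at ht
    have hlb : ⟪gradient f (x + t • v) - gradient f x, v⟫ ≤ β * (t * ‖v‖) * ‖v‖ := by
      have hcs := real_inner_le_norm (gradient f (x + t • v) - gradient f x) v
      have hl : ‖gradient f (x + t • v) - gradient f x‖ ≤ β * (t * ‖v‖) := by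
        have := hlip.dist_le_mul (x + t • v) x
        rw [dist_eq_norm, dist_eq_norm] at this
        have h2 : ‖x + t • v - x‖ = t * ‖v‖ := by
          rw [add_sub_cancel_left, norm_smul, Real.norm_eq_abs, abs_of_pos ht.1]
        rw [h2] at this
        calc ‖gradient f (x + t • v) - gradient f x‖ ≤ β.toNNReal * (t * ‖v‖) := this
          _ ≤ β * (t * ‖v‖) := by
              rw [Real.coe_toNNReal β hβ.le]
      nlinarith [norm_nonneg v, mul_nonneg ht.1.le (norm_nonneg v)]
    have hexp : ⟪gradient f (x + t • v), v⟫
        = ⟪gradient f (x + t • v) - gradient f x, v⟫ + c2 := by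
      rw [hc2, inner_sub_left]; ring
    rw [hexp, hc1]
    nlinarith [hlb]
  have h01 := hmono (Set.left_mem_Icc.2 one_pos.le) (Set.right_mem_Icc.2 one_pos.le) one_pos.le
  have hφ0 : φ 0 = - f x := by simp [hφ]
  have hφ1 : φ 1 = c1 + c2 - f y := by
    have hxy : x + v = y := by rw [hv]; abel
    simp [hφ, hxy]
  rw [hφ0, hφ1] at h01
  rw [hc1, hc2] at h01
  linarith

/-- for an `α`-strongly convex, `β`-smooth `f` with minimizer `x*`,
with `x⁺ = x − ∇f(x)/β`, `x^{++} = x − ∇f(x)/α` and `κ = β/α`, one has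
`‖x* − x^{++}‖² ≤ (1 − 1/κ)‖∇f(x)‖²/α² − (2/α)(f(x⁺) − f*)` for every `x`. -/
theorem stmt_18 (n : ℕ) (α β κ : ℝ) (hα : 0 < α) (hαβ : α ≤ β) (hκ : κ = β / α)
    (f : EuclideanSpace ℝ (Fin n) → ℝ)
    (hsc : ConvexOn ℝ Set.univ (fun z => f z - α / 2 * ‖z‖ ^ 2))
    (hf : Differentiable ℝ f)
    (hlip : LipschitzWith β.toNNReal (fun z => gradient f z))
    (xstar : EuclideanSpace ℝ (Fin n)) (hmin : IsMinOn f Set.univ xstar) :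
    ∀ x : EuclideanSpace ℝ (Fin n),
      ‖xstar - (x - α⁻¹ • gradient f x)‖ ^ 2
        ≤ (1 - 1 / κ) * ‖gradient f x‖ ^ 2 / α ^ 2
          - 2 / α * (f (x - β⁻¹ • gradient f x) - f xstar) := by
  intro x
  have hβ : 0 < β := lt_of_lt_of_le hα hαβ
  set g := gradient f x with hg
  set p := x - β⁻¹ • g with hp
  set A := ‖xstar - x‖ ^ 2 with hA
  set B := ⟪g, xstar - x⟫ with hB
  set G := ‖g‖ ^ 2 with hG
  -- strong convexity inequality
  have h1 : f x + B + α / 2 * A ≤ f xstar := my_strong hsc hf x xstar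
  -- descent lemma
  have h2 : f p ≤ f x + ⟪g, p - x⟫ + β / 2 * ‖p - x‖ ^ 2 := my_descent hβ hf hlip x p
  have hpx : p - x = -(β⁻¹ • g) := by rw [hp]; abel
  have h2' : 2 * β * f p ≤ 2 * β * f x - G := by
    rw [hpx, inner_neg_right, real_inner_smul_right, real_inner_self_eq_norm_sq,
      norm_neg, norm_smul] at h2
    have hb1 : β * β⁻¹ = 1 := mul_inv_cancel₀ hβ.ne'
    have e : (‖(β⁻¹ : ℝ)‖ * ‖g‖) ^ 2 = β⁻¹ * β⁻¹ * G := by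
      rw [Real.norm_eq_abs, abs_of_pos (inv_pos.2 hβ), hG]; ring
    rw [e, ← hG] at h2
    have hmul := mul_le_mul_of_nonneg_left h2 (by positivity : (0:ℝ) ≤ 2 * β)
    have e2 : 2 * β * (f x + -(β⁻¹ * G) + β / 2 * (β⁻¹ * β⁻¹ * G)) = 2 * β * f x - G := by
      field_simp
      ring
    linarith [hmul, e2.le, e2.ge]
  -- expand the left side
  have hL : ‖xstar - (x - α⁻¹ • g)‖ ^ 2 = A + 2 * (α⁻¹ * B) + α⁻¹ * α⁻¹ * G := by
    have e0 : xstar - (x - α⁻¹ • g) = (xstar - x) + α⁻¹ • g := by abel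
    rw [e0, norm_add_sq_real, real_inner_smul_right, norm_smul, Real.norm_eq_abs,
      abs_of_pos (inv_pos.2 hα), real_inner_comm]
    rw [hA, hB, hG]; ring
  rw [hL, hκ]
  rw [← sub_nonneg]
  have hrepr : (1 - 1 / (β / α)) * G / α ^ 2 - 2 / α * (f p - f xstar)
      - (A + 2 * (α⁻¹ * B) + α⁻¹ * α⁻¹ * G)
      = (2 * α * β * f xstar - 2 * α * β * f p - α * G
          - α ^ 2 * β * A - 2 * α * β * B) / (α ^ 2 * β) := by
    field_simp
    ring
  rw [hrepr]
  apply div_nonneg _ (by positivity)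
  nlinarith [mul_le_mul_of_nonneg_left h1 (by positivity : (0:ℝ) ≤ 2 * α * β),
    mul_le_mul_of_nonneg_left h2' hα.le]
end
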